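/- arXiv:math/0503416 — 2 statements merged into one kernel-verified Lean document; each statement's English description precedes it below -/
import Mathlib

section
/- Let P be a finite poset with minimum 0̂ and maximum 1̂, and φ : P → P an increasing map with φ(0̂) = 0̂. Let Q satisfy Fix φ ⊆ Q ⊆ P and Q ∩ φ^{-∞}(1̂) = {1̂}, where φ^{-∞}(1̂) is the set of z with φ^{|P|}(z) = 1̂. Then ∑_{z : φ^∞(z) = 1̂} μ_P(0̂, z) = μ_Q(0̂, 1̂). -/
open Finset IncidenceAlgebra

namespace CrapoAux

section Iter
variable {Y : Type*} [PartialOrder Y]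

lemma le_iterate (φ : Y → Y) (hincr : ∀ x, x ≤ φ x) : ∀ (n : ℕ) (x : Y), x ≤ φ^[n] x := by
  intro n
  induction n with
  | zero => intro x; simp
  | succ n ih =>
    intro x
    calc x ≤ φ x := hincr x
    _ ≤ φ^[n] (φ x) := ih _
    _ = φ^[n + 1] x := (Function.iterate_succ_apply φ n x).symm

lemma iterate_card_fixed [Fintype Y] (φ : Y → Y) (hincr : ∀ x, x ≤ φ x) (x : Y) :
    φ (φ^[Fintype.card Y] x) = φ^[Fintype.card Y] x := by
  have hex : ∃ k, k ≤ Fintype.card Y ∧ φ^[k + 1] x = φ^[k] x := by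
    by_contra h
    push_neg at h
    have hstep : ∀ k, k ≤ Fintype.card Y → φ^[k] x < φ^[k + 1] x := by
      intro k hk
      refine lt_of_le_of_ne ?_ (fun he => h k hk he.symm)
      rw [Function.iterate_succ_apply']
      exact hincr _
    have hm : ∀ a b, a < b → b ≤ Fintype.card Y → φ^[a] x < φ^[b] x := by
      intro a b hab hb
      induction b with
      | zero => omega
      | succ b ih =>
        rcases Nat.lt_or_ge a b with h' | h'
        · exact (ih h' (by omega)).trans (hstep b (by omega))
        · have : a = b := by omega
          subst this
          exact hstep a (by omega)
    have hinj : Function.Injective (fun k : Fin (Fintype.card Y + 1) => φ^[(k : ℕ)] x) := by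
      intro i j hij
      by_contra hne
      rcases Ne.lt_or_gt (fun h' : i = j => hne h') with h' | h'
      · exact absurd hij (ne_of_lt (hm i j h' (by omega)))
      · exact absurd hij.symm (ne_of_lt (hm j i h' (by omega)))
    have := Fintype.card_le_of_injective _ hinj
    simp at this
  obtain ⟨k, hk, heq⟩ := hex
  have stable : ∀ m, φ^[k + m] x = φ^[k] x := by
    intro m
    induction m with
    | zero => rfl
    | succ m ih =>
      have : k + (m + 1) = (k + m) + 1 := by omega
      rw [this, Function.iterate_succ_apply', ih, ← Function.iterate_succ_apply' φ k x, heq]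
  have hcard : φ^[Fintype.card Y] x = φ^[k] x := by
    have : Fintype.card Y = k + (Fintype.card Y - k) := by omega
    rw [this, stable]
  rw [hcard, ← Function.iterate_succ_apply' φ k x, heq]

end Iter

section MuSub
variable {Y : Type*} [PartialOrder Y] [DecidableEq Y] [LocallyFiniteOrder Y]

lemma mu_subtype (p : Y → Prop) [DecidablePred p] [DecidableEq (Subtype p)]
    [LocallyFiniteOrder (Subtype p)]
    (hp : ∀ ⦃a x b : Y⦄, p a → p b → a ≤ x → x ≤ b → p x) :
    ∀ (n : ℕ) (a b : Subtype p), (Icc (a : Y) (b : Y)).card ≤ n →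
      mu ℤ a b = mu ℤ (a : Y) (b : Y) := by
  intro n
  induction n with
  | zero =>
    intro a b h
    have hab : ¬ (a : Y) ≤ (b : Y) := by
      intro hle
      have : (b : Y) ∈ Icc (a : Y) (b : Y) := by simp [hle]
      have := Finset.card_pos.2 ⟨_, this⟩
      omega
    have h1 : mu ℤ (a : Y) (b : Y) = 0 := apply_eq_zero_of_not_le hab _
    have h2 : mu ℤ a b = 0 := apply_eq_zero_of_not_le (fun h' : a ≤ b => hab h') _
    rw [h1, h2]
  | succ n ih =>
    intro a b hcard
    by_cases hab : (a : Y) ≤ (b : Y)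
    · by_cases heq : a = b
      · subst heq; simp
      · have heq' : (a : Y) ≠ (b : Y) := fun h => heq (Subtype.ext h)
        rw [mu_eq_neg_sum_Ico_of_ne heq, mu_eq_neg_sum_Ico_of_ne heq']
        congr 1
        refine Finset.sum_bij' (fun x _ => (x : Y))
          (fun y hy => (⟨y, hp a.2 b.2 (Finset.mem_Ico.1 hy).1 (le_of_lt (Finset.mem_Ico.1 hy).2)⟩ : Subtype p))
          ?_ ?_ ?_ ?_ ?_
        · intro x hx
          rw [Finset.mem_Ico] at hx ⊢
          exact ⟨hx.1, hx.2⟩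
        · intro y hy
          rw [Finset.mem_Ico] at hy ⊢
          exact ⟨hy.1, hy.2⟩
        · intro x hx; rfl
        · intro y hy; rfl
        · intro x hx
          rw [Finset.mem_Ico] at hx
          have hxb : (x : Y) < (b : Y) := hx.2
          have hsub : Icc (a : Y) (x : Y) ⊆ Icc (a : Y) (b : Y) :=
            Finset.Icc_subset_Icc_right hxb.le
          have hne : (b : Y) ∉ Icc (a : Y) (x : Y) := by
            simp only [Finset.mem_Icc, not_and]
            intro _
            exact fun hbx => absurd (lt_of_le_of_lt hbx hxb) (lt_irrefl _)
          have hlt : (Icc (a : Y) (x : Y)).card < (Icc (a : Y) (b : Y)).card :=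
            Finset.card_lt_card (Finset.ssubset_iff_of_subset hsub |>.2 ⟨_, by simp [hab], hne⟩)
          exact ih a x (by omega)
    · have hab' : ¬ a ≤ b := fun h' => hab h'
      have h1 : mu ℤ (a : Y) (b : Y) = 0 := apply_eq_zero_of_not_le hab _
      have h2 : mu ℤ a b = 0 := apply_eq_zero_of_not_le hab' _
      rw [h1, h2]

end MuSub



open scoped Classical

section Fiber
variable {Y : Type*} [PartialOrder Y] [Fintype Y] [DecidableEq Y] [LocallyFiniteOrder Y]
variable (c : Y → Y)

lemma fiber_sum [DecidableEq {y : Y // c y = y}] [LocallyFiniteOrder {y : Y // c y = y}]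
    (hcm : Monotone c) (hci : ∀ x, x ≤ c x) (hcc : ∀ x, c (c x) = c x) (x : Y) :
    ∀ (n : ℕ) (g : {y : Y // c y = y}), (Icc x (g : Y)).card ≤ n →
      ∑ y ∈ univ.filter (fun y => x ≤ y ∧ c y = (g : Y)), mu ℤ x y
        = if h : c x = x then mu ℤ (⟨x, h⟩ : {y : Y // c y = y}) g else 0 := by
  have empty_case : ∀ g : {y : Y // c y = y}, ¬ x ≤ (g : Y) →
      ∑ y ∈ univ.filter (fun y => x ≤ y ∧ c y = (g : Y)), mu ℤ x y
        = if h : c x = x then mu ℤ (⟨x, h⟩ : {y : Y // c y = y}) g else 0 := by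
    intro g hxg
    have hfe : univ.filter (fun y => x ≤ y ∧ c y = (g : Y)) = (∅ : Finset Y) := by
      ext y
      simp only [Finset.mem_filter, Finset.mem_univ, true_and, Finset.notMem_empty, iff_false]
      rintro ⟨hxy, hcy⟩
      exact hxg (le_trans hxy (hcy ▸ hci y))
    rw [hfe, Finset.sum_empty]
    split
    · next h =>
      exact (apply_eq_zero_of_not_le (fun hle : (⟨x, h⟩ : {y : Y // c y = y}) ≤ g => hxg hle) _).symm
    · rfl
  intro n
  induction n with
  | zero =>
    intro g hcard
    refine empty_case g ?_
    intro hle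
    have hg : (g : Y) ∈ Icc x (g : Y) := by simp [hle]
    have := Finset.card_pos.2 ⟨_, hg⟩
    omega
  | succ n ih =>
    intro g hcard
    by_cases hxg : x ≤ (g : Y)
    swap
    · exact empty_case g hxg
    set t : Finset {y : Y // c y = y} :=
      univ.filter (fun g' : {y : Y // c y = y} => x ≤ (g' : Y) ∧ (g' : Y) ≤ (g : Y)) with ht
    have hmaps : ∀ y ∈ Icc x (g : Y), (⟨c y, hcc y⟩ : {y : Y // c y = y}) ∈ t := by
      intro y hy
      rw [Finset.mem_Icc] at hy
      refine Finset.mem_filter.2 ⟨Finset.mem_univ _, le_trans hy.1 (hci y), ?_⟩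
      calc c y ≤ c (g : Y) := hcm hy.2
      _ = (g : Y) := g.2
    have hpart := Finset.sum_fiberwise_of_maps_to hmaps (fun y => mu ℤ x y)
    have hfib : ∀ g' ∈ t, (Icc x (g : Y)).filter (fun y => (⟨c y, hcc y⟩ : {y : Y // c y = y}) = g')
        = univ.filter (fun y => x ≤ y ∧ c y = (g' : Y)) := by
      intro g' hg'
      rw [ht, Finset.mem_filter] at hg'
      ext y
      simp only [Finset.mem_filter, Finset.mem_Icc, Finset.mem_univ, true_and, Subtype.ext_iff]
      constructor
      · rintro ⟨⟨h1, _⟩, h3⟩; exact ⟨h1, h3⟩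
      · rintro ⟨h1, h2⟩
        exact ⟨⟨h1, le_trans (le_trans (hci y) (le_of_eq h2)) hg'.2.2⟩, h2⟩
    set A : {y : Y // c y = y} → ℤ := fun g' => ∑ y ∈ univ.filter (fun y => x ≤ y ∧ c y = (g' : Y)), mu ℤ x y with hA
    have key : ∑ g' ∈ t, A g' = if x = (g : Y) then 1 else 0 := by
      rw [← sum_Icc_mu_right x (g : Y), ← hpart]
      exact Finset.sum_congr rfl (fun g' hg' => by rw [hfib g' hg'])
    have hgt : g ∈ t := Finset.mem_filter.2 ⟨Finset.mem_univ _, hxg, le_refl _⟩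
    have hsplit : ∑ g' ∈ t.erase g, A g' + A g = ∑ g' ∈ t, A g' :=
      Finset.sum_erase_add t A hgt
    have hih : ∀ g' ∈ t.erase g, A g'
        = if h : c x = x then mu ℤ (⟨x, h⟩ : {y : Y // c y = y}) g' else 0 := by
      intro g' hg'
      have hne := Finset.ne_of_mem_erase hg'
      have hg't := Finset.mem_of_mem_erase hg'
      rw [ht, Finset.mem_filter] at hg't
      have hlt : (g' : Y) < (g : Y) :=
        lt_of_le_of_ne hg't.2.2 (fun h => hne (Subtype.ext h))
      have hsub : Icc x (g' : Y) ⊆ Icc x (g : Y) := Finset.Icc_subset_Icc_right hlt.le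
      have hnotin : (g : Y) ∉ Icc x (g' : Y) := by
        simp only [Finset.mem_Icc, not_and]
        exact fun _ hgg' => absurd (lt_of_le_of_lt hgg' hlt) (lt_irrefl _)
      have hcl : (Icc x (g' : Y)).card < (Icc x (g : Y)).card :=
        Finset.card_lt_card ((Finset.ssubset_iff_of_subset hsub).2 ⟨_, by simp [hxg], hnotin⟩)
      exact ih g' (by omega)
    by_cases h : c x = x
    · have ht2 : t = Icc (⟨x, h⟩ : {y : Y // c y = y}) g := by
        ext g'
        rw [ht, Finset.mem_filter, Finset.mem_Icc]
        constructor
        · rintro ⟨_, h1, h2⟩; exact ⟨h1, h2⟩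
        · rintro ⟨h1, h2⟩; exact ⟨Finset.mem_univ _, h1, h2⟩
      have hsum2 : ∑ g' ∈ t, mu ℤ (⟨x, h⟩ : {y : Y // c y = y}) g'
          = if x = (g : Y) then 1 else 0 := by
        rw [ht2, sum_Icc_mu_right]
        have hiff : ((⟨x, h⟩ : {y : Y // c y = y}) = g) ↔ x = (g : Y) :=
          ⟨fun hh => congrArg Subtype.val hh, fun hh => Subtype.ext hh⟩
        simp only [hiff]
      have hsplit2 : ∑ g' ∈ t.erase g, mu ℤ (⟨x, h⟩ : {y : Y // c y = y}) g'
            + mu ℤ (⟨x, h⟩ : {y : Y // c y = y}) g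
          = ∑ g' ∈ t, mu ℤ (⟨x, h⟩ : {y : Y // c y = y}) g' :=
        Finset.sum_erase_add t _ hgt
      have heq : ∑ g' ∈ t.erase g, A g'
          = ∑ g' ∈ t.erase g, mu ℤ (⟨x, h⟩ : {y : Y // c y = y}) g' :=
        Finset.sum_congr rfl (fun g' hg' => by rw [hih g' hg', dif_pos h])
      rw [dif_pos h]
      have := key
      rw [← hsplit, heq] at this
      rw [← hsum2, ← hsplit2] at this
      linarith
    · have hzero : ∑ g' ∈ t.erase g, A g' = 0 :=
        Finset.sum_eq_zero (fun g' hg' => by rw [hih g' hg', dif_neg h])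
      have hxgne : x ≠ (g : Y) := by
        intro hxe
        exact h (by rw [hxe]; exact g.2)
      rw [dif_neg h]
      have := key
      rw [← hsplit, hzero, if_neg hxgne] at this
      linarith
end Fiber



open scoped Classical

variable {Y : Type*} [PartialOrder Y] [Fintype Y] [DecidableEq Y] [LocallyFiniteOrder Y]

lemma M_min_eq_one (m : Y) (hm : ∀ x, m ≤ x) :
    ∑ x : Y, ∑ y : Y, mu ℤ x y = 1 := by
  rw [Finset.sum_comm]
  have hinner : ∀ y : Y, ∑ x : Y, mu ℤ x y = if m = y then 1 else 0 := by
    intro y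
    rw [← sum_Icc_mu_left m y]
    symm
    apply Finset.sum_subset (Finset.subset_univ _)
    intro x _ hx
    rw [Finset.mem_Icc] at hx
    exact apply_eq_zero_of_not_le (fun hle => hx ⟨hm x, hle⟩) _
  rw [Finset.sum_congr rfl (fun y _ => hinner y)]
  simp

lemma M_eq_M_fix (c : Y → Y)
    (hcm : Monotone c) (hci : ∀ x, x ≤ c x) (hcc : ∀ x, c (c x) = c x) :
    ∑ x : Y, ∑ y : Y, mu ℤ x y
      = ∑ a : {y : Y // c y = y}, ∑ b : {y : Y // c y = y}, mu ℤ a b := by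
  have inner : ∀ x : Y, ∑ y : Y, mu ℤ x y
      = ∑ g : {y : Y // c y = y},
          ∑ y ∈ univ.filter (fun y => x ≤ y ∧ c y = (g : Y)), mu ℤ x y := by
    intro x
    have hmaps : ∀ y ∈ (univ : Finset Y),
        (⟨c y, hcc y⟩ : {y : Y // c y = y}) ∈ (univ : Finset {y : Y // c y = y}) :=
      fun _ _ => Finset.mem_univ _
    rw [← Finset.sum_fiberwise_of_maps_to hmaps (fun y => mu ℤ x y)]
    refine Finset.sum_congr rfl (fun g _ => ?_)
    refine (Finset.sum_subset ?_ ?_).symm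
    · intro y hy
      rw [Finset.mem_filter] at hy ⊢
      exact ⟨Finset.mem_univ _, Subtype.ext hy.2.2⟩
    · intro y hy hny
      rw [Finset.mem_filter] at hy hny
      have hcy : c y = (g : Y) := congrArg Subtype.val hy.2
      have : ¬ x ≤ y := fun hle => hny ⟨Finset.mem_univ _, hle, hcy⟩
      exact apply_eq_zero_of_not_le this _
  rw [Finset.sum_congr rfl (fun x _ => inner x)]
  have step2 : ∀ x : Y, ∑ g : {y : Y // c y = y},
      ∑ y ∈ univ.filter (fun y => x ≤ y ∧ c y = (g : Y)), mu ℤ x y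
      = if h : c x = x then ∑ g : {y : Y // c y = y}, mu ℤ (⟨x, h⟩ : {y : Y // c y = y}) g
        else 0 := by
    intro x
    have := fun g : {y : Y // c y = y} => fiber_sum c hcm hci hcc x (Icc x (g : Y)).card g le_rfl
    rw [Finset.sum_congr rfl (fun g _ => this g)]
    split
    · rfl
    · simp
  rw [Finset.sum_congr rfl (fun x _ => step2 x)]
  set f : Y → ℤ := fun x =>
    if h : c x = x then ∑ g : {y : Y // c y = y}, mu ℤ (⟨x, h⟩ : {y : Y // c y = y}) g else 0
    with hf
  have hzero : ∀ x ∈ (univ : Finset Y), x ∉ univ.filter (fun x => c x = x) → f x = 0 := by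
    intro x _ hx
    rw [Finset.mem_filter] at hx
    rw [hf]
    exact dif_neg (fun h => hx ⟨Finset.mem_univ _, h⟩)
  rw [← Finset.sum_subset (Finset.filter_subset _ _) hzero]
  rw [Finset.sum_subtype (p := fun x => c x = x) (univ.filter (fun x => c x = x))
    (fun x => by simp) f]
  refine Finset.sum_congr rfl (fun a _ => ?_)
  rw [hf]
  have : f (a : Y) = ∑ g : {y : Y // c y = y}, mu ℤ (⟨(a : Y), a.2⟩ : {y : Y // c y = y}) g :=
    dif_pos a.2
  rw [hf] at this
  rw [this]

lemma M_eq_one_of_closure (c : Y → Y)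
    (hcm : Monotone c) (hci : ∀ x, x ≤ c x) (hcc : ∀ x, c (c x) = c x)
    (m : Y) (hm : c m = m) (hmin : ∀ x : Y, c x = x → m ≤ x) :
    ∑ x : Y, ∑ y : Y, mu ℤ x y = 1 := by
  rw [M_eq_M_fix c hcm hci hcc]
  exact M_min_eq_one (⟨m, hm⟩ : {y : Y // c y = y}) (fun a => hmin (a : Y) a.2)


end CrapoAux

open scoped Classical in
/-- Generalized Crapo closure theorem, first case: for a finite bounded poset
`P`, an increasing map `φ` fixing `0̂`, and `Fix φ ⊆ Q ⊆ P` with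
`Q ∩ φ^{-∞}(1̂) = {1̂}`, we have `∑_{φ^∞ z = 1̂} μ_P(0̂, z) = μ_Q(0̂, 1̂)`. -/
theorem crapo_closure_fixed_bot {P : Type*} [Fintype P] [DecidableEq P]
    [PartialOrder P] [BoundedOrder P] [LocallyFiniteOrder P]
    (φ : P → P) (hmono : Monotone φ) (hincr : ∀ x : P, x ≤ φ x)
    (hbot : φ ⊥ = ⊥) (Q : Set P) (hfix : {x : P | φ x = x} ⊆ Q)
    (hQ : Q ∩ {z : P | φ^[Fintype.card P] z = ⊤} = {(⊤ : P)}) :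
    ∑ z ∈ Finset.univ.filter (fun z : P => φ^[Fintype.card P] z = ⊤),
        IncidenceAlgebra.mu ℤ (⊥ : P) z =
      IncidenceAlgebra.mu ℤ (⟨⊥, hfix hbot⟩ : Q)
        ⟨⊤, by
          have h : (⊤ : P) ∈ Q ∩ {z : P | φ^[Fintype.card P] z = ⊤} := by
            rw [hQ]; rfl
          exact h.1⟩ := by
  classical
  open Finset IncidenceAlgebra CrapoAux in
  set n := Fintype.card P with hn
  set c : P → P := φ^[n] with hc
  -- basic facts about `c`
  have hc_fix : ∀ x, φ (c x) = c x := fun x => iterate_card_fixed φ hincr x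
  have hc_incr : ∀ x, x ≤ c x := fun x => le_iterate φ hincr n x
  have hc_mono : Monotone c := hmono.iterate n
  have hfix_iter : ∀ (y : P), φ y = y → ∀ k, φ^[k] y = y := by
    intro y hy k
    induction k with
    | zero => rfl
    | succ k ih => rw [Function.iterate_succ_apply', ih, hy]
  have hc_idem : ∀ x, c (c x) = c x := fun x => hfix_iter (c x) (hc_fix x) n
  have hcQ : ∀ x, c x ∈ Q := fun x => hfix (hc_fix x)
  have htopQ : (⊤ : P) ∈ Q := by
    have h : (⊤ : P) ∈ Q ∩ {z : P | c z = ⊤} := by rw [hQ]; rfl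
    exact h.1
  have hcq_netop : ∀ q : P, q ∈ Q → q ≠ ⊤ → c q ≠ ⊤ := by
    intro q hq hne hctop
    apply hne
    have : q ∈ Q ∩ {z : P | c z = ⊤} := ⟨hq, hctop⟩
    rw [hQ] at this
    exact this
  set bbar : Q := (⟨⊥, hfix hbot⟩ : Q) with hbbar
  set tbar : Q := (⟨⊤, htopQ⟩ : Q) with htbar
  have htbar_top : ∀ q : Q, q ≤ tbar := fun q => (le_top : (q : P) ≤ ⊤)
  -- key2
  have key2 : ∀ z : P, ∑ q ∈ univ.filter (fun q : Q => z ≤ (q : P)), mu ℤ q tbar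
      = if c z = ⊤ then 1 else 0 := by
    intro z
    by_cases hz : c z = ⊤
    · rw [if_pos hz]
      have hfilter : univ.filter (fun q : Q => z ≤ (q : P)) = {tbar} := by
        ext q
        simp only [Finset.mem_filter, Finset.mem_univ, true_and, Finset.mem_singleton]
        constructor
        · intro hzq
          have h1 : c z ≤ c (q : P) := hc_mono hzq
          have h2 : c (q : P) = ⊤ := le_antisymm le_top (hz ▸ h1)
          have : (q : P) ∈ Q ∩ {z : P | c z = ⊤} := ⟨q.2, h2⟩
          rw [hQ] at this
          exact Subtype.ext this
        · intro hq; rw [hq]; exact le_top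
      rw [hfilter, Finset.sum_singleton, mu_self]
    · rw [if_neg hz]
      set s : Finset Q := (univ.filter (fun q : Q => z ≤ (q : P))).erase tbar with hs
      have htf : tbar ∈ univ.filter (fun q : Q => z ≤ (q : P)) :=
        Finset.mem_filter.2 ⟨Finset.mem_univ _, le_top⟩
      have hsplit := Finset.sum_erase_add (univ.filter (fun q : Q => z ≤ (q : P)))
        (fun q => mu ℤ q tbar) htf
      -- the double sum identity
      set p : Q → Prop := fun q => z ≤ (q : P) ∧ q ≠ tbar with hp
      have hsp : s = univ.filter p := by
        ext q
        simp only [hs, hp, Finset.mem_erase, Finset.mem_filter, Finset.mem_univ, true_and]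
        tauto
      -- interval-closedness of p inside Q
      have hpic : ∀ ⦃a x b : Q⦄, p a → p b → a ≤ x → x ≤ b → p x := by
        intro a x b hpa hpb hax hxb
        refine ⟨le_trans hpa.1 hax, ?_⟩
        intro hxt
        apply hpb.2
        have : tbar ≤ b := hxt ▸ hxb
        exact le_antisymm (htbar_top b) this
      -- the closure on the subtype
      have hne_coe : ∀ a : Subtype p, ((a : Q) : P) ≠ ⊤ := by
        intro a ha
        exact a.2.2 (Subtype.ext ha)
      set cX : Subtype p → Subtype p := fun a =>
        ⟨⟨c ((a : Q) : P), hcQ _⟩,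
          le_trans a.2.1 (hc_incr _),
          fun h => hcq_netop ((a : Q) : P) (a : Q).2 (hne_coe a)
            (congrArg Subtype.val h)⟩ with hcX
      have hcXmono : Monotone cX := by
        intro a b hab
        exact hc_mono (hab : ((a : Q) : P) ≤ ((b : Q) : P))
      have hcXincr : ∀ a, a ≤ cX a := fun a => hc_incr ((a : Q) : P)
      have hcXidem : ∀ a, cX (cX a) = cX a := by
        intro a
        apply Subtype.ext
        apply Subtype.ext
        exact hc_idem _
      have hmQ : c z ∈ Q := hcQ z
      set m : Subtype p := ⟨⟨c z, hmQ⟩, hc_incr z, fun h => hz (congrArg Subtype.val h)⟩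
        with hm
      have hmfix : cX m = m := by
        apply Subtype.ext; apply Subtype.ext; exact hc_idem z
      have hmmin : ∀ a : Subtype p, cX a = a → m ≤ a := by
        intro a ha
        have h1 : c ((a : Q) : P) = ((a : Q) : P) := congrArg (Subtype.val ∘ Subtype.val) ha
        have h2 : c z ≤ c ((a : Q) : P) := hc_mono a.2.1
        show ((m : Q) : P) ≤ ((a : Q) : P)
        exact le_trans h2 (le_of_eq h1)
      have hM : ∑ a : Subtype p, ∑ b : Subtype p, mu ℤ a b = 1 :=
        M_eq_one_of_closure cX hcXmono hcXincr hcXidem m hmfix hmmin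
      -- transfer mu along the subtype embedding
      have hmuX : ∀ a b : Subtype p, mu ℤ a b = mu ℤ (a : Q) (b : Q) :=
        fun a b => mu_subtype p hpic (Icc (a : Q) (b : Q)).card a b le_rfl
      have hMQ : ∑ q ∈ univ.filter p, ∑ r ∈ univ.filter p, mu ℤ q r = 1 := by
        rw [← hM]
        rw [Finset.sum_subtype (p := p) (univ.filter p) (fun q => by simp)
          (fun q => ∑ r ∈ univ.filter p, mu ℤ q r)]
        refine Finset.sum_congr rfl (fun a _ => ?_)
        rw [Finset.sum_subtype (p := p) (univ.filter p) (fun q => by simp)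
          (fun r => mu ℤ (a : Q) r)]
        exact Finset.sum_congr rfl (fun b _ => (hmuX a b).symm)
      -- inner sums over `Ico q tbar` agree with sums over `filter p`
      have hinner : ∀ q ∈ univ.filter p, ∑ r ∈ univ.filter p, mu ℤ q r
          = ∑ r ∈ Ico q tbar, mu ℤ q r := by
        intro q hq
        rw [Finset.mem_filter] at hq
        refine (Finset.sum_subset ?_ ?_).symm
        · intro r hr
          rw [Finset.mem_Ico] at hr
          refine Finset.mem_filter.2 ⟨Finset.mem_univ _, le_trans hq.2.1 hr.1, ?_⟩
          exact fun h => absurd (h ▸ hr.2) (lt_irrefl _)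
        · intro r hr hnr
          rw [Finset.mem_filter] at hr
          rw [Finset.mem_Ico] at hnr
          have hrlt : r < tbar := lt_of_le_of_ne (htbar_top r) hr.2.2
          have : ¬ q ≤ r := fun h => hnr ⟨h, hrlt⟩
          exact apply_eq_zero_of_not_le this _
      have hD : ∑ q ∈ s, ∑ r ∈ Ico q tbar, mu ℤ q r = 1 := by
        rw [← hMQ, hsp]
        exact (Finset.sum_congr rfl hinner).symm
      have herase : ∑ q ∈ s, mu ℤ q tbar = -1 := by
        have : ∀ q ∈ s, mu ℤ q tbar = -∑ r ∈ Ico q tbar, mu ℤ q r := by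
          intro q hqs
          exact mu_eq_neg_sum_Ico_of_ne (Finset.ne_of_mem_erase hqs)
        rw [Finset.sum_congr rfl this, Finset.sum_neg_distrib, hD]
      rw [← hsplit, herase]
      simp
  -- key1
  have key1 : ∀ q : Q, ∑ z ∈ univ.filter (fun z : P => z ≤ (q : P)), mu ℤ (⊥ : P) z
      = if (⊥ : P) = (q : P) then 1 else 0 := by
    intro q
    rw [← sum_Icc_mu_right (⊥ : P) (q : P)]
    refine Finset.sum_congr ?_ (fun _ _ => rfl)
    ext z
    simp [Finset.mem_Icc]
  -- final assembly
  have main : mu ℤ bbar tbar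
      = ∑ z ∈ univ.filter (fun z : P => c z = ⊤), mu ℤ (⊥ : P) z := by
    calc mu ℤ bbar tbar
        = ∑ q : Q, (if bbar = q then mu ℤ q tbar else 0) := by
          rw [Finset.sum_ite_eq univ bbar (fun q => mu ℤ q tbar), if_pos (Finset.mem_univ _)]
      _ = ∑ q : Q, (if (⊥ : P) = (q : P) then 1 else 0) * mu ℤ q tbar := by
          refine Finset.sum_congr rfl (fun q _ => ?_)
          by_cases h : bbar = q
          · rw [if_pos h, if_pos (congrArg Subtype.val h), one_mul]
          · rw [if_neg h, if_neg (fun h' => h (Subtype.ext h')), zero_mul]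
      _ = ∑ q : Q, (∑ z ∈ univ.filter (fun z : P => z ≤ (q : P)), mu ℤ (⊥ : P) z)
            * mu ℤ q tbar := by
          exact Finset.sum_congr rfl (fun q _ => by rw [key1 q])
      _ = ∑ q : Q, ∑ z : P,
            (if z ≤ (q : P) then mu ℤ (⊥ : P) z * mu ℤ q tbar else 0) := by
          refine Finset.sum_congr rfl (fun q _ => ?_)
          rw [Finset.sum_mul, Finset.sum_filter]
      _ = ∑ z : P, ∑ q : Q,
            (if z ≤ (q : P) then mu ℤ (⊥ : P) z * mu ℤ q tbar else 0) := Finset.sum_comm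
      _ = ∑ z : P, mu ℤ (⊥ : P) z
            * ∑ q ∈ univ.filter (fun q : Q => z ≤ (q : P)), mu ℤ q tbar := by
          refine Finset.sum_congr rfl (fun z _ => ?_)
          rw [Finset.mul_sum, Finset.sum_filter]
      _ = ∑ z : P, mu ℤ (⊥ : P) z * (if c z = ⊤ then 1 else 0) := by
          exact Finset.sum_congr rfl (fun z _ => by rw [key2 z])
      _ = ∑ z ∈ univ.filter (fun z : P => c z = ⊤), mu ℤ (⊥ : P) z := by
          rw [Finset.sum_filter]
          refine Finset.sum_congr rfl (fun z _ => ?_)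
          split <;> simp
  exact main.symm
end

section
/- Let P be a finite poset with 0̂ and 1̂ and φ : P → P an increasing map with φ(0̂) ≠ 0̂, and let Q satisfy Fix φ ⊆ Q ⊆ P and Q ∩ φ^{-∞}(1̂) = {1̂}. Then ∑_{z : φ^∞(z) = 1̂} μ_P(0̂, z) = 0. -/
open Finset

lemma iter_mono_in_m {P : Type*} [PartialOrder P] (φ : P → P)
    (hincr : ∀ x : P, x ≤ φ x) (x : P) : Monotone (fun m => φ^[m] x) := by
  apply monotone_nat_of_le_succ
  intro m
  rw [Function.iterate_succ_apply']
  exact hincr _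

lemma iter_stab {P : Type*} [Fintype P] [PartialOrder P] (φ : P → P)
    (hincr : ∀ x : P, x ≤ φ x) (x : P) :
    φ (φ^[Fintype.card P] x) = φ^[Fintype.card P] x := by
  classical
  set n := Fintype.card P with hn
  have h : ∃ i ≤ n, φ^[i] x = φ^[i+1] x := by
    by_contra h
    push_neg at h
    have hinj : Function.Injective (fun i : Fin (n+1) => φ^[(i : ℕ)] x) := by
      have hsm : StrictMono (fun i : Fin (n+1) => φ^[(i : ℕ)] x) := by
        intro i j hij
        have h1 : φ^[(i:ℕ)] x ≤ φ^[(i:ℕ)+1] x := iter_mono_in_m φ hincr x (Nat.le_succ _)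
        have h2 : φ^[(i:ℕ)] x ≠ φ^[(i:ℕ)+1] x := h i (by omega)
        exact lt_of_lt_of_le (lt_of_le_of_ne h1 h2)
          (iter_mono_in_m φ hincr x (by omega))
      exact hsm.injective
    have := Fintype.card_le_of_injective _ hinj
    simp at this
    omega
  obtain ⟨i, hi, heq⟩ := h
  have hconst : ∀ m, i ≤ m → φ^[m] x = φ^[i] x := by
    intro m hm
    induction m with
    | zero => simp [Nat.le_zero.mp hm]
    | succ k ih =>
      rcases Nat.lt_or_ge i (k+1) with h1 | h1
      · have hk : i ≤ k := by omega
        rw [Function.iterate_succ_apply', ih hk, ← Function.iterate_succ_apply' φ i x, ← heq]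
      · have : i = k + 1 := by omega
        rw [this]
  have h1 := hconst n hi
  have h2 := hconst (n+1) (by omega)
  rw [← Function.iterate_succ_apply' φ n x, h2, h1]



open scoped Classical in
/-- Generalized Crapo closure theorem, second case: for a finite bounded poset
`P`, an increasing map `φ` with `φ(0̂) ≠ 0̂`, and `Fix φ ⊆ Q ⊆ P` with
`Q ∩ φ^{-∞}(1̂) = {1̂}`, we have `∑_{φ^∞ z = 1̂} μ_P(0̂, z) = 0`. -/
theorem crapo_closure_not_fixed_bot {P : Type*} [Fintype P] [DecidableEq P]
    [PartialOrder P] [BoundedOrder P] [LocallyFiniteOrder P]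
    (φ : P → P) (hmono : Monotone φ) (hincr : ∀ x : P, x ≤ φ x)
    (hbot : φ ⊥ ≠ ⊥) (Q : Set P) (hfix : {x : P | φ x = x} ⊆ Q)
    (hQ : Q ∩ {z : P | φ^[Fintype.card P] z = ⊤} = {(⊤ : P)}) :
    ∑ z ∈ Finset.univ.filter (fun z : P => φ^[Fintype.card P] z = ⊤),
        IncidenceAlgebra.mu ℤ (⊥ : P) z = 0 := by
  classical
  set n := Fintype.card P with hn
  set c : P → P := fun z => φ^[n] z with hc
  have hcmono : Monotone c := hmono.iterate n
  have hle : ∀ z, z ≤ c z := fun z => iter_mono_in_m φ hincr z (Nat.zero_le n)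
  have hcfix : ∀ z, φ (c z) = c z := iter_stab φ hincr
  have key : ∀ y : P, φ y = y →
      ∑ z ∈ Finset.univ.filter (fun z => c z = y), IncidenceAlgebra.mu ℤ (⊥ : P) z = 0 := by
    intro y
    induction y using WellFoundedLT.induction with
    | _ y IH =>
    intro hy
    have hyne : (⊥ : P) ≠ y := by
      rintro rfl; exact hbot hy
    have h0 : ∑ z ∈ Finset.Icc (⊥ : P) y, IncidenceAlgebra.mu ℤ (⊥ : P) z = 0 := by
      rw [IncidenceAlgebra.sum_Icc_mu_right, if_neg hyne]
    have hIcc : Finset.Icc (⊥ : P) y = Finset.univ.filter (fun z => z ≤ y) := by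
      ext z; simp
    set t := Finset.univ.filter (fun w => φ w = w ∧ w ≤ y) with ht
    have hsplit : ∑ w ∈ t, ∑ z ∈ (Finset.univ.filter (fun z => z ≤ y)).filter
          (fun z => c z = w), IncidenceAlgebra.mu ℤ (⊥ : P) z
        = ∑ z ∈ Finset.univ.filter (fun z => z ≤ y), IncidenceAlgebra.mu ℤ (⊥ : P) z := by
      apply Finset.sum_fiberwise_of_maps_to
      intro z hz
      simp only [Finset.mem_filter, Finset.mem_univ, true_and] at hz
      rw [ht, Finset.mem_filter]
      refine ⟨Finset.mem_univ _, hcfix z, ?_⟩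
      calc c z ≤ c y := hcmono hz
        _ = y := Function.iterate_fixed hy n
    have hfiber : ∀ w ∈ t, (Finset.univ.filter (fun z => z ≤ y)).filter (fun z => c z = w)
        = Finset.univ.filter (fun z => c z = w) := by
      intro w hw
      simp only [ht, Finset.mem_filter, Finset.mem_univ, true_and] at hw
      ext z
      simp only [Finset.mem_filter, Finset.mem_univ, true_and, and_iff_right_iff_imp]
      intro hcz
      exact le_trans (hle z) (hcz ▸ hw.2)
    have hsum0 : ∑ w ∈ t, ∑ z ∈ Finset.univ.filter (fun z => c z = w),
        IncidenceAlgebra.mu ℤ (⊥ : P) z = 0 := by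
      rw [Finset.sum_congr rfl (fun w hw => by rw [hfiber w hw]) ] at hsplit
      rw [hsplit, ← hIcc, h0]
    have hyt : y ∈ t := by simp [ht, hy]
    rw [← Finset.add_sum_erase _ _ hyt] at hsum0
    have hrest : ∑ w ∈ t.erase y, ∑ z ∈ Finset.univ.filter (fun z => c z = w),
        IncidenceAlgebra.mu ℤ (⊥ : P) z = 0 := by
      apply Finset.sum_eq_zero
      intro w hw
      have hwm := Finset.mem_of_mem_erase hw
      simp only [ht, Finset.mem_filter, Finset.mem_univ, true_and] at hwm
      exact IH w (lt_of_le_of_ne hwm.2 (Finset.ne_of_mem_erase hw)) hwm.1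
    rw [hrest, add_zero] at hsum0
    exact hsum0
  have htop : φ (⊤ : P) = ⊤ := le_antisymm le_top (hincr ⊤)
  exact key ⊤ htop
end
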